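/- Let X = (1/(d√d)) Σ_{i,j=1}^d u_{ij} |ij⟩⟨ji| where u_{ij} are the entries of a unitary matrix U on ℂ^d with |u_{ij}| = 1/√d for all i,j. Then the trace norm of the partial transpose of X (transpose taken on the second tensor factor) equals 1/√d, i.e., ‖X^Γ‖₁ = 1/√d. In particular ‖X‖₁ = 1. -/

import Mathlib

open scoped ComplexOrder

/-- Trace norm `‖A‖₁ = tr √(AᴴA)`. -/
noncomputable def traceNorm {n : Type*} [Fintype n] [DecidableEq n] (A : Matrix n n ℂ) : ℝ :=
  (((((Matrix.posSemidef_conjTranspose_mul_self A).1.eigenvectorUnitary : Matrix n n ℂ) *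
      Matrix.diagonal (((↑) : ℝ → ℂ) ∘ Real.sqrt ∘ (Matrix.posSemidef_conjTranspose_mul_self A).1.eigenvalues) *
      (star ((Matrix.posSemidef_conjTranspose_mul_self A).1.eigenvectorUnitary : Matrix n n ℂ)))).trace).re

/-- Partial transpose on the second tensor factor: `(|ij⟩⟨kl|)^Γ = |il⟩⟨kj|`. -/
def pt {α β : Type*} (M : Matrix (α × β) (α × β) ℂ) : Matrix (α × β) (α × β) ℂ :=
  fun p q => M (p.1, q.2) (q.1, p.2)

open scoped Matrix MatrixOrder in
lemma traceNorm_of_diag {n : Type*} [Fintype n] [DecidableEq n] (f : n → ℝ)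
    (hf : ∀ i, 0 ≤ f i) (M : Matrix n n ℂ)
    (h : Mᴴ * M = Matrix.diagonal fun i => ((f i : ℂ))^2) :
    traceNorm M = ∑ i, f i := by
  have hD : (Matrix.diagonal fun i => ((f i : ℂ))).PosSemidef :=
    Matrix.posSemidef_diagonal_iff.mpr fun i => by
      rw [Complex.le_def]; simp [hf i]
  have hsq : (Matrix.diagonal fun i => ((f i : ℂ)))^2 = Mᴴ * M := by
    rw [h, sq, Matrix.diagonal_mul_diagonal]
    ring_nf
  have hA := (Matrix.posSemidef_conjTranspose_mul_self M).1
  have heq : CFC.sqrt (Mᴴ * M) = Matrix.diagonal fun i => ((f i : ℂ)) := by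
    open scoped MatrixOrder in
    exact CFC.sqrt_unique (by rw [← sq, hsq]) (Matrix.nonneg_iff_posSemidef.mpr hD)
  have e1 : (((Matrix.posSemidef_conjTranspose_mul_self M).1.eigenvectorUnitary : Matrix n n ℂ) *
      Matrix.diagonal (((↑) : ℝ → ℂ) ∘ Real.sqrt ∘ (Matrix.posSemidef_conjTranspose_mul_self M).1.eigenvalues) *
      (star ((Matrix.posSemidef_conjTranspose_mul_self M).1.eigenvectorUnitary : Matrix n n ℂ))) =
      Matrix.diagonal fun i => ((f i : ℂ)) := by
    open scoped MatrixOrder in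
    rw [← heq, CFC.sqrt_eq_real_sqrt _ (Matrix.nonneg_iff_posSemidef.mpr
      (Matrix.posSemidef_conjTranspose_mul_self M)), cfcₙ_eq_cfc,
      (Matrix.posSemidef_conjTranspose_mul_self M).1.cfc_eq]
    rfl
  rw [traceNorm, e1, Matrix.trace_diagonal]
  simp

/-- for `X = (1/(d√d)) Σ_{ij} u_{ij} |ij⟩⟨ji|` with `u` unitary and
`|u_{ij}| = 1/√d`, one has `‖X^Γ‖₁ = 1/√d` and `‖X‖₁ = 1`. -/
theorem stmt0 (d : ℕ) (hd : 0 < d) (u : Matrix (Fin d) (Fin d) ℂ)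
    (hu : u ∈ Matrix.unitaryGroup (Fin d) ℂ)
    (habs : ∀ i j, ‖u i j‖ = 1 / Real.sqrt d)
    (X : Matrix (Fin d × Fin d) (Fin d × Fin d) ℂ)
    (hX : X = fun p q => if p.1 = q.2 ∧ p.2 = q.1
        then (((d : ℂ) * (Real.sqrt d : ℂ))⁻¹) * u p.1 p.2 else 0) :
    traceNorm (pt X) = 1 / Real.sqrt d ∧ traceNorm X = 1 := by
  have hd0 : (d : ℝ) ≠ 0 := Nat.cast_ne_zero.mpr hd.ne'
  have hs0 : Real.sqrt d ≠ 0 := Real.sqrt_ne_zero'.mpr (by positivity)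
  have hsq : (Real.sqrt d) ^ 2 = (d : ℝ) := Real.sq_sqrt (by positivity)
  have hcol : ∀ i k, (∑ a, (starRingEnd ℂ) (u a i) * u a k) = if i = k then 1 else 0 := by
    intro i k
    have h1 : (star u * u) i k = (1 : Matrix (Fin d) (Fin d) ℂ) i k := by rw [hu.1]
    simpa [Matrix.mul_apply, Matrix.star_apply, Matrix.one_apply] using h1
  have habs2 : ∀ i j, (starRingEnd ℂ) (u i j) * u i j = ((d : ℂ))⁻¹ := by
    intro i j
    rw [mul_comm, Complex.mul_conj, Complex.normSq_eq_norm_sq, habs, div_pow, one_pow, hsq]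
    push_cast; rw [one_div]
  have hconjc : (starRingEnd ℂ) (((d : ℂ) * (Real.sqrt d : ℂ))⁻¹) =
      ((d : ℂ) * (Real.sqrt d : ℂ))⁻¹ := by
    simp [map_inv₀, Complex.conj_ofReal]
  constructor
  · rw [traceNorm_of_diag (fun p => if p.1 = p.2 then ((d : ℝ) * Real.sqrt d)⁻¹ else 0)
      (fun p => by positivity) _ ?_]
    · rw [Fintype.sum_prod_type]
      simp only [Finset.sum_ite_eq, Finset.mem_univ, if_true, Finset.sum_const,
        Finset.card_univ, Fintype.card_fin, nsmul_eq_mul]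
      field_simp
    · ext ⟨i, j⟩ ⟨k, l⟩
      rw [Matrix.mul_apply, Fintype.sum_prod_type]
      simp only [Matrix.conjTranspose_apply, pt, hX, Matrix.diagonal_apply, Prod.mk.injEq]
      by_cases hji : j = i
      · by_cases hlk : l = k
        · subst hji; subst hlk
          simp only [and_true, Complex.star_def, apply_ite (starRingEnd ℂ), map_mul, map_zero, ite_mul, mul_ite, zero_mul,
            mul_zero, hconjc, Finset.sum_ite_eq, Finset.mem_univ, if_true]
          have : ∀ a : Fin d,
              ((d : ℂ) * (Real.sqrt d : ℂ))⁻¹ * (starRingEnd ℂ) (u a j) *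
                (((d : ℂ) * (Real.sqrt d : ℂ))⁻¹ * u a l) =
              (((d : ℂ) * (Real.sqrt d : ℂ))⁻¹ * ((d : ℂ) * (Real.sqrt d : ℂ))⁻¹) *
                ((starRingEnd ℂ) (u a j) * u a l) := fun a => by ring
          rw [Finset.sum_congr rfl (fun a _ => this a), ← Finset.mul_sum, hcol]
          by_cases hjl : j = l
          · subst hjl
            simp only [if_pos rfl, and_self, mul_one]
            push_cast
            ring
          · simp [hjl, Ne.symm hjl]
        · simp only [hlk, and_false, if_false, mul_zero, Finset.sum_const_zero]
          by_cases h1 : i = k ∧ j = l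
          · have h4 : ¬ k = l := fun h => hlk h.symm
            simp [h1.1, h1.2, h4]
          · simp [h1]
      · simp only [hji, and_false, if_false, zero_mul, mul_zero, Finset.sum_const_zero]
        by_cases h1 : i = k ∧ j = l
        · have h4 : ¬ k = l := fun h => hji (h1.2.trans (h.symm.trans h1.1.symm))
          simp [h1.1, h1.2, h4]
        · simp [h1]
  · rw [traceNorm_of_diag (fun _ => ((d : ℝ)^2)⁻¹) (fun p => by positivity) _ ?_]
    · simp only [Finset.sum_const, Finset.card_univ, Fintype.card_prod, Fintype.card_fin,
        nsmul_eq_mul, Nat.cast_mul]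
      field_simp
    · ext ⟨i, j⟩ ⟨k, l⟩
      rw [Matrix.mul_apply, Fintype.sum_prod_type]
      simp only [Matrix.conjTranspose_apply]
      simp only [Matrix.conjTranspose_apply, hX, Matrix.diagonal_apply, Prod.mk.injEq,
        Complex.star_def, apply_ite (starRingEnd ℂ), map_mul, map_zero, ite_mul, mul_ite,
        zero_mul, mul_zero, hconjc, ite_and]
      have hsqC : ((Real.sqrt d : ℝ) : ℂ)^2 = (d : ℂ) := by
        rw [← Complex.ofReal_pow, hsq]; norm_cast
      rw [Finset.sum_eq_single j (fun b _ hb => by simp [hb]) (by simp)]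
      simp only [if_pos rfl]
      rw [Finset.sum_eq_single i (fun b _ hb => by simp [hb]) (by simp)]
      simp only [if_pos rfl]
      by_cases h1 : j = l
      · subst h1
        by_cases h2 : i = k
        · subst h2
          simp only [if_pos rfl, and_self, if_true]
          rw [show ((d:ℂ) * (Real.sqrt d : ℂ))⁻¹ * (starRingEnd ℂ) (u j i) *
              (((d:ℂ) * (Real.sqrt d : ℂ))⁻¹ * u j i) =
              (((d:ℂ) * (Real.sqrt d : ℂ))⁻¹ * ((d:ℂ) * (Real.sqrt d : ℂ))⁻¹) *
              ((starRingEnd ℂ) (u j i) * u j i) from by ring, habs2]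
          push_cast
          have hdC : (d : ℂ) ≠ 0 := Nat.cast_ne_zero.mpr hd.ne'
          have hsC : ((Real.sqrt d : ℝ) : ℂ) ≠ 0 := by
            simpa using Complex.ofReal_ne_zero.mpr hs0
          rw [← mul_inv, ← mul_inv, inv_pow]
          congr 1
          linear_combination (d:ℂ)^3 * hsqC
        · simp [h2]
      · simp [h1]
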